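/- arXiv:math/0608152 — 2 statements merged into one kernel-verified Lean document; each statement's English description precedes it below -/
import Mathlib

section
/- Let n ≥ 1 and let g_1,…,g_n be real constants; set y_{n+1} := y_1 and x_{n+1} := x_1 (cyclic indexing). Define Q : ℝ^n × ℝ^n → ℝ by Q(x,y) = exp( Σ_{i=1}^{n} ( e^{x_i − y_i} + g_i e^{y_{i+1} − x_i} ) ). Then for all x, y ∈ ℝ^n one has −(1/2) Σ_{i=1}^{n} ∂²Q/∂x_i²(x,y) + ( Σ_{i=1}^{n} g_i e^{x_{i+1} − x_i} ) Q(x,y) = −(1/2) Σ_{i=1}^{n} ∂²Q/∂y_i²(x,y) + ( Σ_{i=1}^{n} g_i e^{y_{i+1} − y_i} ) Q(x,y). That is, the kernel of the Baxter Q-operator at zero spectral parameter intertwines the quadratic Hamiltonian of the affine (closed) gl_n Toda chain with itself. -/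
/-!
Write `Q = exp S`. In each of the two sets of variables `S` is a sum of functions of one
coordinate, so `∂ᵢ²Q = (∂ᵢ²S + (∂ᵢS)²) Q`. With `aᵢ = e^{xᵢ - yᵢ}` and `bᵢ = gᵢ e^{yᵢ₊₁ - xᵢ}`
one has `∂_{xᵢ}S = aᵢ - bᵢ`, `∂²_{xᵢ}S = aᵢ + bᵢ`, `∂_{yᵢ₊₁}S = bᵢ - aᵢ₊₁`,
`∂²_{yᵢ₊₁}S = aᵢ₊₁ + bᵢ`, while the potentials are `gᵢ e^{xᵢ₊₁ - xᵢ} = aᵢ₊₁ bᵢ` and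
`gᵢ e^{yᵢ₊₁ - yᵢ} = aᵢ bᵢ`. The cross terms of the squares absorb the potentials, and the two
sides, divided by `Q`, differ by `½ Σᵢ (φ(aᵢ₊₁) - φ(aᵢ))` with `φ(a) = a + a²`, which vanishes
by cyclic reindexing.
-/

open Real

/-- Second partial derivative of `f` in the `i`-th coordinate at `x`. -/
noncomputable def pd2 {k : ℕ} (f : (Fin k → ℝ) → ℝ) (i : Fin k) (x : Fin k → ℝ) : ℝ :=
  deriv (deriv (fun t : ℝ => f (Function.update x i t))) (x i)

/-- Kernel of the Baxter Q-operator at zero spectral parameter for the closed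
(affine) `gl_n` Toda chain, `n = m + 1 ≥ 1`; indices are cyclic (`Fin` addition):
`Q(x,y) = exp( Σ_{i=1}^{n} ( e^{x_i − y_i} + g_i e^{y_{i+1} − x_i} ) )`. -/
noncomputable def Qker (m : ℕ) (g x y : Fin (m + 1) → ℝ) : ℝ :=
  Real.exp (∑ i : Fin (m + 1),
    (Real.exp (x i - y i) + g i * Real.exp (y (i + 1) - x i)))

open Finset Function

theorem deriv_deriv_exp_comp {s s' : ℝ → ℝ} {s'' t : ℝ} (hs : ∀ u, HasDerivAt s (s' u) u)
    (hs' : HasDerivAt s' s'' t) :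
    deriv (deriv fun u => exp (s u)) t = (s'' + s' t ^ 2) * exp (s t) := by
  have hderiv : deriv (fun u => exp (s u)) = fun u => exp (s u) * s' u :=
    funext fun u => (hs u).exp.deriv
  rw [hderiv, ((hs t).exp.fun_mul hs').deriv]
  ring

theorem sum_apply_update {ι α M : Type*} [Fintype ι] [DecidableEq ι] [AddCommMonoid M]
    (f : ι → α → M) (x : ι → α) (i : ι) (t : α) :
    ∑ j, f j (update x i t j) = f i t + ∑ j ∈ univ \ {i}, f j (x j) := by
  simp_rw [apply_update]
  exact sum_update_of_mem (mem_univ i) _ _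

theorem pd2_exp_sum_apply {k : ℕ} (f : Fin k → ℝ → ℝ) (x : Fin k → ℝ) (i : Fin k)
    {f' : ℝ → ℝ} {f'' : ℝ} (hf : ∀ t, HasDerivAt (f i) (f' t) t)
    (hf' : HasDerivAt f' f'' (x i)) :
    pd2 (fun z => exp (∑ j, f j (z j))) i x = (f'' + f' (x i) ^ 2) * exp (∑ j, f j (x j)) := by
  unfold pd2
  simp_rw [sum_apply_update f x i]
  rw [deriv_deriv_exp_comp (fun t => (hf t).add_const _) hf', ← sum_apply_update, update_eq_self]

theorem hasDerivAt_mul_exp_sub_add_mul_exp_sub (p a q c t : ℝ) :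
    HasDerivAt (fun u => p * exp (u - a) + q * exp (c - u))
      (p * exp (t - a) + -q * exp (c - t)) t := by
  have hl := ((hasDerivAt_id' t).sub_const a).exp.const_mul p
  have hr := ((hasDerivAt_id' t).const_sub c).exp.const_mul q
  exact (hl.fun_add hr).congr_deriv (by ring)

theorem sum_neg_half_add_sq_add_sum_mul_shift {G : Type*} [AddGroup G] [Fintype G]
    (a b : G → ℝ) (s : G) :
    -(1/2) * ∑ i, (a i + b i + (a i - b i) ^ 2) + ∑ i, a (i + s) * b i
      = -(1/2) * ∑ i, (a (i + s) + b i + (a (i + s) - b i) ^ 2) + ∑ i, a i * b i := by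
  have hshift : ∑ i, (a (i + s) + a (i + s) ^ 2) = ∑ i, (a i + a i ^ 2) :=
    Equiv.sum_comp (Equiv.addRight s) fun i => a i + a i ^ 2
  rw [← sub_eq_zero]
  calc _ = (1/2) * (∑ i, (a (i + s) + a (i + s) ^ 2) - ∑ i, (a i + a i ^ 2)) := by
        simp only [mul_sum, ← sum_sub_distrib, ← sum_add_distrib]
        exact sum_congr rfl fun i _ => by ring
    _ = 0 := by rw [hshift, sub_self, mul_zero]

theorem Qker_eq_exp_sum_pred (m : ℕ) (g x y : Fin (m + 1) → ℝ) :
    Qker m g x y = exp (∑ j, (g (j - 1) * exp (y j - x (j - 1)) + exp (x j - y j))) := by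
  rw [Qker, sum_add_distrib, sum_add_distrib, add_comm,
    ← Equiv.sum_comp (Equiv.addRight 1) fun j => g (j - 1) * exp (y j - x (j - 1))]
  simp only [Equiv.coe_addRight, add_sub_cancel_right]

theorem pd2_Qker_left (m : ℕ) (g x y : Fin (m + 1) → ℝ) (i : Fin (m + 1)) :
    pd2 (fun u => Qker m g u y) i x
      = (exp (x i - y i) + g i * exp (y (i + 1) - x i)
          + (exp (x i - y i) - g i * exp (y (i + 1) - x i)) ^ 2) * Qker m g x y := by
  have h := pd2_exp_sum_apply (fun j u => 1 * exp (u - y j) + g j * exp (y (j + 1) - u)) x i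
    (hasDerivAt_mul_exp_sub_add_mul_exp_sub 1 (y i) (g i) (y (i + 1)))
    (hasDerivAt_mul_exp_sub_add_mul_exp_sub 1 (y i) (-g i) (y (i + 1)) (x i))
  simp only [one_mul] at h
  unfold Qker
  rw [h]
  ring

theorem pd2_Qker_right_succ (m : ℕ) (g x y : Fin (m + 1) → ℝ) (i : Fin (m + 1)) :
    pd2 (fun v => Qker m g x v) (i + 1) y
      = (exp (x (i + 1) - y (i + 1)) + g i * exp (y (i + 1) - x i)
          + (exp (x (i + 1) - y (i + 1)) - g i * exp (y (i + 1) - x i)) ^ 2) * Qker m g x y := by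
  have h := pd2_exp_sum_apply
    (fun j v => g (j - 1) * exp (v - x (j - 1)) + 1 * exp (x j - v)) y (i + 1)
    (by simpa only [add_sub_cancel_right] using
      hasDerivAt_mul_exp_sub_add_mul_exp_sub (g i) (x i) 1 (x (i + 1)))
    (hasDerivAt_mul_exp_sub_add_mul_exp_sub (g i) (x i) (-1) (x (i + 1)) (y (i + 1)))
  simp only [one_mul] at h
  simp only [Qker_eq_exp_sum_pred, h]
  ring

/-- The Baxter kernel intertwines the quadratic Hamiltonian of the closed
(affine) `gl_n` Toda chain with itself, `n = m + 1 ≥ 1`. -/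
theorem affine_gl_baxter_intertwining (m : ℕ) (g : Fin (m + 1) → ℝ)
    (x y : Fin (m + 1) → ℝ) :
    -(1/2) * (∑ i : Fin (m + 1), pd2 (fun u => Qker m g u y) i x)
      + (∑ i : Fin (m + 1), g i * Real.exp (x (i + 1) - x i)) * Qker m g x y
    = -(1/2) * (∑ i : Fin (m + 1), pd2 (fun v => Qker m g x v) i y)
      + (∑ i : Fin (m + 1), g i * Real.exp (y (i + 1) - y i)) * Qker m g x y := by
  set a : Fin (m + 1) → ℝ := fun i => exp (x i - y i)
  set b : Fin (m + 1) → ℝ := fun i => g i * exp (y (i + 1) - x i)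
  have hx : ∑ i, pd2 (fun u => Qker m g u y) i x
      = (∑ i, (a i + b i + (a i - b i) ^ 2)) * Qker m g x y := by
    rw [sum_mul]
    exact sum_congr rfl fun i _ => pd2_Qker_left m g x y i
  have hy : ∑ i, pd2 (fun v => Qker m g x v) i y
      = (∑ i, (a (i + 1) + b i + (a (i + 1) - b i) ^ 2)) * Qker m g x y := by
    rw [← Equiv.sum_comp (Equiv.addRight 1), sum_mul]
    exact sum_congr rfl fun i _ => pd2_Qker_right_succ m g x y i
  have hVx : ∑ i, g i * exp (x (i + 1) - x i) = ∑ i, a (i + 1) * b i :=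
    sum_congr rfl fun i _ => by rw [mul_left_comm, ← exp_add, sub_add_sub_cancel]
  have hVy : ∑ i, g i * exp (y (i + 1) - y i) = ∑ i, a i * b i :=
    sum_congr rfl fun i _ => by rw [mul_left_comm, ← exp_add, sub_add_sub_cancel']
  rw [hx, hy, hVx, hVy]
  linear_combination Qker m g x y * sum_neg_half_add_sq_add_sum_mul_shift a b 1
end

section
/- Let g : ℕ → ℝ with g_i ≥ 0 (indices i ≥ 1), and let x, z : ℕ → ℝ. Assume the families indexed by i ≥ 1: (e^{x_i − z_i}), (g_{i+1} e^{z_{i+1} − x_i}), (g_{i+1} e^{x_{i+1} − x_i}), (g_{i+1} e^{z_{i+1} − z_i}), (e^{2(x_i − z_i)}), (g_{i+1}² e^{2(z_{i+1} − x_i)}) are summable. Then, with F = g_1 e^{x_1 + z_1} + Σ_{i≥1} ( e^{x_i − z_i} + g_{i+1} e^{z_{i+1} − x_i} ) and Q = exp F, the pointwise identity −(1/2) Σ_{i≥1} [ (∂F/∂x_i)² + ∂²F/∂x_i² ] Q + [ 2 g_1 e^{2 x_1} + Σ_{i≥1} g_{i+1} e^{x_{i+1} − x_i} ] Q = −(1/2)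 Σ_{i≥1} [ (∂F/∂z_i)² + ∂²F/∂z_i² ] Q + [ g_1 g_2 e^{z_1 + z_2} + Σ_{i≥1} g_{i+1} e^{z_{i+1} − z_i} ] Q holds (each coordinate enters only finitely many terms of F, so ∂F/∂x_1 = g_1 e^{x_1+z_1} + e^{x_1−z_1} − g_2 e^{z_2−x_1}, ∂F/∂x_i = e^{x_i−z_i} − g_{i+1} e^{z_{i+1}−x_i} for i ≥ 2, ∂F/∂z_1 = g_1 e^{x_1+z_1} − e^{x_1−z_1}, ∂F/∂z_i = g_i e^{z_i−x_{i−1}} − e^{x_i−z_i} for i ≥ 2, and similarly for second derivatives). This expresses that the kernel Q intertwines the C_∞ and D_∞ Toda chain Hamiltonians: H^{C_∞}(x)Q = H^{D_∞}(z)Q. -/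
open Real


lemma toda_key (a b tx tz fL fR : ℕ → ℝ) (P cx cz Q : ℝ)
    (Sa : Summable a) (Sb : Summable b)
    (Sa2 : Summable fun i => a i ^ 2) (Sb2 : Summable fun i => b i ^ 2)
    (Sab : Summable fun i => a i * b i)
    (Sa1b : Summable fun i => a (i + 1) * b i)
    (hfL0 : fL 0 = (P + a 0 - b 0) ^ 2 + (P + a 0 + b 0))
    (hfLs : ∀ n, fL (n + 1) = (a (n + 1) - b (n + 1)) ^ 2 + a (n + 1) + b (n + 1))
    (hfR0 : fR 0 = (P - a 0) ^ 2 + (P + a 0))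
    (hfRs : ∀ n, fR (n + 1) = (b n - a (n + 1)) ^ 2 + b n + a (n + 1))
    (htx : ∀ n, tx n = a (n + 1) * b n) (htz : ∀ n, tz n = a n * b n)
    (hcx : cx = 2 * (P * a 0)) (hcz : cz = P * b 0) :
    -(1/2) * (∑' i : ℕ, fL i) * Q + (cx + ∑' i : ℕ, tx i) * Q
      = -(1/2) * (∑' i : ℕ, fR i) * Q + (cz + ∑' i : ℕ, tz i) * Q := by
  have shift : ∀ f : ℕ → ℝ, Summable f → ∑' i : ℕ, f (i + 1) = (∑' i : ℕ, f i) - f 0 := by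
    intro f hf
    have h := Summable.tsum_eq_zero_add hf
    linarith
  have Sa' : Summable (fun i => a (i + 1)) := (summable_nat_add_iff 1).2 Sa
  have Sa2' : Summable (fun i => a (i + 1) ^ 2) := (summable_nat_add_iff 1).2 Sa2
  have Sf1 : Summable (fun i => (a i - b i) ^ 2 + a i + b i) :=
    Summable.congr (((Sa2.add Sb2).sub (Sab.mul_left 2)).add (Sa.add Sb)) (fun i => by ring)
  have Sf2 : Summable (fun i => (b i - a (i + 1)) ^ 2 + b i + a (i + 1)) :=
    Summable.congr (((Sb2.add Sa2').sub (Sa1b.mul_left 2)).add (Sb.add Sa')) (fun i => by ring)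
  have e1 : ∑' i : ℕ, ((a i - b i) ^ 2 + a i + b i)
      = ((∑' i : ℕ, a i ^ 2) + (∑' i : ℕ, b i ^ 2) - 2 * (∑' i : ℕ, a i * b i))
        + ((∑' i : ℕ, a i) + (∑' i : ℕ, b i)) := by
    calc ∑' i : ℕ, ((a i - b i) ^ 2 + a i + b i)
        = ∑' i : ℕ, ((a i ^ 2 + b i ^ 2 - 2 * (a i * b i)) + (a i + b i)) :=
          tsum_congr fun i => by ring
      _ = (∑' i : ℕ, (a i ^ 2 + b i ^ 2 - 2 * (a i * b i))) + ∑' i : ℕ, (a i + b i) :=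
          Summable.tsum_add ((Sa2.add Sb2).sub (Sab.mul_left 2)) (Sa.add Sb)
      _ = ((∑' i : ℕ, a i ^ 2) + (∑' i : ℕ, b i ^ 2) - 2 * (∑' i : ℕ, a i * b i))
            + ((∑' i : ℕ, a i) + (∑' i : ℕ, b i)) := by
          rw [Summable.tsum_sub (Sa2.add Sb2) (Sab.mul_left 2), Summable.tsum_add Sa2 Sb2, Summable.tsum_add Sa Sb,
            tsum_mul_left]
  have sA : ∑' i : ℕ, a (i + 1) = (∑' i : ℕ, a i) - a 0 := shift a Sa
  have sA2 : ∑' i : ℕ, a (i + 1) ^ 2 = (∑' i : ℕ, a i ^ 2) - a 0 ^ 2 :=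
    shift (fun i => a i ^ 2) Sa2
  have e2 : ∑' i : ℕ, ((b i - a (i + 1)) ^ 2 + b i + a (i + 1))
      = ((∑' i : ℕ, b i ^ 2) + ((∑' i : ℕ, a i ^ 2) - a 0 ^ 2)
            - 2 * (∑' i : ℕ, a (i + 1) * b i))
        + ((∑' i : ℕ, b i) + ((∑' i : ℕ, a i) - a 0)) := by
    calc ∑' i : ℕ, ((b i - a (i + 1)) ^ 2 + b i + a (i + 1))
        = ∑' i : ℕ, ((b i ^ 2 + a (i + 1) ^ 2 - 2 * (a (i + 1) * b i)) + (b i + a (i + 1))) :=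
          tsum_congr fun i => by ring
      _ = (∑' i : ℕ, (b i ^ 2 + a (i + 1) ^ 2 - 2 * (a (i + 1) * b i)))
            + ∑' i : ℕ, (b i + a (i + 1)) :=
          Summable.tsum_add ((Sb2.add Sa2').sub (Sa1b.mul_left 2)) (Sb.add Sa')
      _ = _ := by
          rw [Summable.tsum_sub (Sb2.add Sa2') (Sa1b.mul_left 2), Summable.tsum_add Sb2 Sa2',
            Summable.tsum_add Sb Sa', tsum_mul_left, sA, sA2]
  have SfL : Summable fL := by
    rw [← summable_nat_add_iff 1]
    exact Summable.congr ((summable_nat_add_iff 1).2 Sf1) (fun n => (hfLs n).symm)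
  have SfR : Summable fR := by
    rw [← summable_nat_add_iff 1]
    exact Summable.congr Sf2 (fun n => (hfRs n).symm)
  have sF1 : ∑' n : ℕ, ((a (n + 1) - b (n + 1)) ^ 2 + a (n + 1) + b (n + 1))
      = (∑' i : ℕ, ((a i - b i) ^ 2 + a i + b i)) - ((a 0 - b 0) ^ 2 + a 0 + b 0) :=
    shift (fun i => (a i - b i) ^ 2 + a i + b i) Sf1
  have TL : (∑' i : ℕ, fL i)
      = ((P + a 0 - b 0) ^ 2 + (P + a 0 + b 0))
        + ((∑' i : ℕ, ((a i - b i) ^ 2 + a i + b i)) - ((a 0 - b 0) ^ 2 + a 0 + b 0)) := by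
    rw [Summable.tsum_eq_zero_add SfL, hfL0]
    congr 1
    rw [tsum_congr hfLs, sF1]
  have TR : (∑' i : ℕ, fR i)
      = ((P - a 0) ^ 2 + (P + a 0))
        + ∑' i : ℕ, ((b i - a (i + 1)) ^ 2 + b i + a (i + 1)) := by
    rw [Summable.tsum_eq_zero_add SfR, hfR0]
    congr 1
    exact tsum_congr hfRs
  rw [TL, TR, tsum_congr htx, tsum_congr htz, hcx, hcz, e1, e2]
  ring

/-- Exponent of the kernel intertwining the `C_∞` and `D_∞` Toda chains:
`F = g_1 e^{x_1 + z_1} + Σ_{i≥1} ( e^{x_i − z_i} + g_{i+1} e^{z_{i+1} − x_i} )`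
(indices are 0-based in Lean: math index `i ≥ 1` is Lean index `i − 1`). -/
noncomputable def Fexp (g x z : ℕ → ℝ) : ℝ :=
  g 0 * Real.exp (x 0 + z 0)
    + ∑' i : ℕ, (Real.exp (x i - z i) + g (i + 1) * Real.exp (z (i + 1) - x i))

/-- The kernel `Q = exp F` intertwines the `C_∞` and `D_∞` Toda chain
Hamiltonians: `H^{C_∞}(x) Q = H^{D_∞}(z) Q`, written out using
`∂²Q/∂u² = ((∂F/∂u)² + ∂²F/∂u²) Q` and the explicit partial derivatives
`∂F/∂x_1 = g_1 e^{x_1+z_1} + e^{x_1−z_1} − g_2 e^{z_2−x_1}`,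
`∂F/∂x_i = e^{x_i−z_i} − g_{i+1} e^{z_{i+1}−x_i}` for `i ≥ 2`,
`∂F/∂z_1 = g_1 e^{x_1+z_1} − e^{x_1−z_1}`,
`∂F/∂z_i = g_i e^{z_i−x_{i−1}} − e^{x_i−z_i}` for `i ≥ 2`,
the second derivatives being the same with all plus signs. -/
theorem Cinf_Dinf_intertwining (g x z : ℕ → ℝ) (hg : ∀ i, 0 ≤ g i)
    (h1 : Summable fun i : ℕ => Real.exp (x i - z i))
    (h2 : Summable fun i : ℕ => g (i + 1) * Real.exp (z (i + 1) - x i))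
    (h3 : Summable fun i : ℕ => g (i + 1) * Real.exp (x (i + 1) - x i))
    (h4 : Summable fun i : ℕ => g (i + 1) * Real.exp (z (i + 1) - z i))
    (h5 : Summable fun i : ℕ => Real.exp (2 * (x i - z i)))
    (h6 : Summable fun i : ℕ => (g (i + 1)) ^ 2 * Real.exp (2 * (z (i + 1) - x i))) :
    -(1/2) * (∑' i : ℕ, (if i = 0 then
          (g 0 * Real.exp (x 0 + z 0) + Real.exp (x 0 - z 0)
              - g 1 * Real.exp (z 1 - x 0)) ^ 2
            + (g 0 * Real.exp (x 0 + z 0) + Real.exp (x 0 - z 0)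
              + g 1 * Real.exp (z 1 - x 0))
        else
          (Real.exp (x i - z i) - g (i + 1) * Real.exp (z (i + 1) - x i)) ^ 2
            + Real.exp (x i - z i) + g (i + 1) * Real.exp (z (i + 1) - x i)))
        * Real.exp (Fexp g x z)
      + (2 * g 0 * Real.exp (2 * x 0)
          + ∑' i : ℕ, g (i + 1) * Real.exp (x (i + 1) - x i))
        * Real.exp (Fexp g x z)
    = -(1/2) * (∑' i : ℕ, (if i = 0 then
          (g 0 * Real.exp (x 0 + z 0) - Real.exp (x 0 - z 0)) ^ 2
            + (g 0 * Real.exp (x 0 + z 0) + Real.exp (x 0 - z 0))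
        else
          (g i * Real.exp (z i - x (i - 1)) - Real.exp (x i - z i)) ^ 2
            + g i * Real.exp (z i - x (i - 1)) + Real.exp (x i - z i)))
        * Real.exp (Fexp g x z)
      + (g 0 * g 1 * Real.exp (z 0 + z 1)
          + ∑' i : ℕ, g (i + 1) * Real.exp (z (i + 1) - z i))
        * Real.exp (Fexp g x z) := by
  refine toda_key (fun i => Real.exp (x i - z i))
    (fun i => g (i + 1) * Real.exp (z (i + 1) - x i))
    (fun i => g (i + 1) * Real.exp (x (i + 1) - x i))
    (fun i => g (i + 1) * Real.exp (z (i + 1) - z i)) _ _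
    (g 0 * Real.exp (x 0 + z 0)) (2 * g 0 * Real.exp (2 * x 0))
    (g 0 * g 1 * Real.exp (z 0 + z 1)) (Real.exp (Fexp g x z))
    h1 h2 ?_ ?_ ?_ ?_ rfl (fun n => by simp) rfl (fun n => by simp) ?_ ?_ ?_ ?_
  · exact h5.congr fun i => by
      rw [show (2:ℝ) * (x i - z i) = (x i - z i) + (x i - z i) by ring, Real.exp_add, ← pow_two]
  · exact h6.congr fun i => by
      rw [show (2:ℝ) * (z (i + 1) - x i) = (z (i + 1) - x i) + (z (i + 1) - x i) by ring,
        Real.exp_add, ← pow_two, ← mul_pow]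
  · exact h4.congr fun i => by
      rw [show z (i + 1) - z i = (x i - z i) + (z (i + 1) - x i) by ring, Real.exp_add]; ring
  · exact h3.congr fun i => by
      rw [show x (i + 1) - x i = (x (i + 1) - z (i + 1)) + (z (i + 1) - x i) by ring,
        Real.exp_add]; ring
  · intro n
    rw [show x (n + 1) - x n = (x (n + 1) - z (n + 1)) + (z (n + 1) - x n) by ring,
      Real.exp_add]; ring
  · intro n
    rw [show z (n + 1) - z n = (x n - z n) + (z (n + 1) - x n) by ring, Real.exp_add]; ring
  · rw [show (2:ℝ) * x 0 = (x 0 + z 0) + (x 0 - z 0) by ring, Real.exp_add]; ring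
  · rw [show z 0 + z 1 = (x 0 + z 0) + (z 1 - x 0) by ring, Real.exp_add]; ring
end
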